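/- Let K : ℝ → ℝ be even, integrable with ∫_ℝ K = 1, bounded on [−1,1], and with ∫₁^∞ u|K(u)| du < ∞. Let f : ℝ → ℝ be uniformly continuous and bounded with modulus of continuity ω(f;·). Then there is a constant C such that for all λ ≥ 1, sup_x |λ∫_ℝ f(t)K(λ(t−x))dt − f(x)| ≤ C·ω(f; 1/λ). -/

import Mathlib

open MeasureTheory Real

/-- The sup-norm modulus of continuity of `f`. -/
noncomputable def modulus (f : ℝ → ℝ) (t : ℝ) : ℝ :=
  sSup {y : ℝ | ∃ s x : ℝ, 0 ≤ s ∧ s ≤ t ∧ y = |f (x + s) - f x|}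

/-!
Chaining increments of length at most `δ` shows `|f (x + s) - f x| ≤ (1 + |s| / δ) ω(f; δ)`
(the same chaining also shows that `ω(f; δ)` is finite for uniformly continuous `f`).
After the substitution `t = x + u / λ` the error is `∫ (f (x + u / λ) - f x) K(u) du`, since
`∫ K = 1`; with `δ = 1 / λ` the integrand is bounded by `(1 + |u|) |K u| ω(f; 1 / λ)`, and
`(1 + |u|) |K u|` is integrable by the first-moment condition and the evenness of `K`.
-/

section Increments

variable {f : ℝ → ℝ} {δ w : ℝ}

theorem abs_sub_le_nat_mul_of_forall_abs_sub_le (hδ : 0 ≤ δ)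
    (h : ∀ x s, 0 ≤ s → s ≤ δ → |f (x + s) - f x| ≤ w) (n : ℕ) (x s : ℝ)
    (hs : 0 ≤ s) (hsn : s ≤ n * δ) : |f (x + s) - f x| ≤ n * w := by
  induction n generalizing x s with
  | zero =>
    obtain rfl : s = 0 := le_antisymm (by simpa using hsn) hs
    simp
  | succ n ih =>
    set r := min s δ
    have hfirst : |f (x + r) - f x| ≤ w := h x r (le_min hs hδ) (min_le_right _ _)
    have hrest : |f (x + r + (s - r)) - f (x + r)| ≤ n * w := by
      refine ih (x + r) (s - r) (sub_nonneg.2 (min_le_left _ _)) ?_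
      push_cast at hsn
      rcases min_cases s δ with ⟨hr, -⟩ | ⟨hr, -⟩ <;> simp only [r, hr] <;> nlinarith
    rw [add_add_sub_cancel] at hrest
    calc |f (x + s) - f x| ≤ |f (x + s) - f (x + r)| + |f (x + r) - f x| := abs_sub_le _ _ _
      _ ≤ n * w + w := add_le_add hrest hfirst
      _ = (n + 1 : ℕ) * w := by push_cast; ring

theorem abs_sub_le_ceil_mul_of_forall_abs_sub_le (hδ : 0 < δ)
    (h : ∀ x s, 0 ≤ s → s ≤ δ → |f (x + s) - f x| ≤ w) (x : ℝ) {s : ℝ} (hs : 0 ≤ s) :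
    |f (x + s) - f x| ≤ ⌈s / δ⌉₊ * w :=
  abs_sub_le_nat_mul_of_forall_abs_sub_le hδ.le h _ x s hs ((div_le_iff₀ hδ).1 (Nat.le_ceil _))

theorem UniformContinuous.bddAbove_increments (hf : UniformContinuous f) (t : ℝ) :
    BddAbove {y : ℝ | ∃ s x : ℝ, 0 ≤ s ∧ s ≤ t ∧ y = |f (x + s) - f x|} := by
  obtain ⟨ε, hε, hεf⟩ := Metric.uniformContinuous_iff.1 hf 1 one_pos
  have hsmall : ∀ x s, 0 ≤ s → s ≤ ε / 2 → |f (x + s) - f x| ≤ 1 := fun x s hs hsε =>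
    (hεf (by rw [dist_eq, add_sub_cancel_left, abs_of_nonneg hs]; linarith)).le
  refine ⟨⌈t / (ε / 2)⌉₊, ?_⟩
  rintro y ⟨s, x, hs, hst, rfl⟩
  calc |f (x + s) - f x| ≤ ⌈s / (ε / 2)⌉₊ * 1 :=
        abs_sub_le_ceil_mul_of_forall_abs_sub_le (by positivity) hsmall x hs
    _ ≤ ⌈t / (ε / 2)⌉₊ := by
        rw [mul_one]
        gcongr

theorem abs_sub_le_modulus (hf : UniformContinuous f) (x : ℝ) {s t : ℝ} (hs : 0 ≤ s)
    (hst : s ≤ t) : |f (x + s) - f x| ≤ modulus f t :=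
  le_csSup (hf.bddAbove_increments t) ⟨s, x, hs, hst, rfl⟩

theorem modulus_nonneg (hf : UniformContinuous f) {t : ℝ} (ht : 0 ≤ t) : 0 ≤ modulus f t := by
  simpa using abs_sub_le_modulus hf 0 le_rfl ht

theorem abs_sub_le_one_add_div_mul_modulus (hf : UniformContinuous f) (hδ : 0 < δ) (x s : ℝ) :
    |f (x + s) - f x| ≤ (1 + |s| / δ) * modulus f δ := by
  have key : ∀ x s, 0 ≤ s → |f (x + s) - f x| ≤ (1 + s / δ) * modulus f δ := fun x s hs =>
    calc |f (x + s) - f x| ≤ ⌈s / δ⌉₊ * modulus f δ :=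
          abs_sub_le_ceil_mul_of_forall_abs_sub_le hδ
            (fun x _ hs hsδ => abs_sub_le_modulus hf x hs hsδ) x hs
      _ ≤ (1 + s / δ) * modulus f δ := by
          gcongr
          · exact modulus_nonneg hf hδ.le
          · linarith [Nat.ceil_lt_add_one (div_nonneg hs hδ.le)]
  rcases le_total 0 s with hs | hs
  · rw [abs_of_nonneg hs]
    exact key x s hs
  · simpa [abs_of_nonpos hs, abs_sub_comm] using key (x + s) (-s) (neg_nonneg.2 hs)

end Increments

section Kernel

variable {K : ℝ → ℝ}

theorem integrable_abs_mul_abs_of_even (hKe : ∀ t, K (-t) = K t) (hKi : Integrable K)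
    (hKd : IntegrableOn (fun u => u * |K u|) (Set.Ioi 1)) :
    Integrable fun u => |u| * |K u| := by
  set h := (Set.Ioi (1 : ℝ)).indicator fun u => u * |K u|
  have hh : Integrable h := (integrable_indicator_iff measurableSet_Ioi).2 hKd
  refine (hKi.abs.add (hh.add hh.comp_neg)).mono'
    (continuous_abs.aestronglyMeasurable.mul hKi.abs.1) (ae_of_all _ fun u => ?_)
  have hh_nonneg : ∀ v, 0 ≤ h v := fun v =>
    Set.indicator_nonneg (fun v (hv : 1 < v) => by positivity) v
  rw [Real.norm_eq_abs, abs_of_nonneg (by positivity)]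
  change |u| * |K u| ≤ |K u| + (h u + h (-u))
  rcases lt_or_ge 1 u with hu | hu
  · have : h u = |u| * |K u| := by
      simp [h, hu, abs_of_pos (one_pos.trans hu)]
    linarith [abs_nonneg (K u), hh_nonneg (-u)]
  rcases lt_or_ge u (-1) with hu' | hu'
  · have : h (-u) = |u| * |K u| := by
      simp [h, show 1 < -u by linarith, hKe, abs_of_neg (by linarith : u < 0)]
    linarith [abs_nonneg (K u), hh_nonneg u]
  · have : |u| * |K u| ≤ |K u| :=
      mul_le_of_le_one_left (abs_nonneg _) (abs_le.2 ⟨hu', hu⟩)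
    linarith [hh_nonneg u, hh_nonneg (-u)]

theorem mul_integral_comp_mul_sub (g : ℝ → ℝ) {l : ℝ} (hl : 0 < l) (x : ℝ) :
    l * ∫ t, g t * K (l * (t - x)) = ∫ u, g (x + u / l) * K u := by
  calc l * ∫ t, g t * K (l * (t - x)) = l * ∫ v, g (x + v) * K (l * v) := by
        rw [← integral_add_left_eq_self _ x]
        simp only [add_sub_cancel_left]
    _ = ∫ u, g (x + u / l) * K (l * (u / l)) := by
        rw [Measure.integral_comp_div (fun v => g (x + v) * K (l * v)), abs_of_pos hl,
          smul_eq_mul]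
    _ = ∫ u, g (x + u / l) * K u := by
        simp_rw [mul_div_cancel₀ _ hl.ne']

theorem abs_integral_mul_sub_le {g D : ℝ → ℝ} {c ω : ℝ} (hKi : Integrable K) (hK1 : ∫ u, K u = 1)
    (hg : AEStronglyMeasurable g) (hD : Integrable D)
    (hbound : ∀ u, |g u - c| * |K u| ≤ D u * ω) :
    |(∫ u, g u * K u) - c| ≤ (∫ u, D u) * ω := by
  have hbound' : ∀ u, |(g u - c) * K u| ≤ D u * ω := fun u => (abs_mul _ _).trans_le (hbound u)
  have hgK : Integrable fun u => (g u - c) * K u :=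
    (hD.mul_const ω).mono' ((hg.sub aestronglyMeasurable_const).mul hKi.1) (ae_of_all _ hbound')
  have herr : (∫ u, g u * K u) - c = ∫ u, (g u - c) * K u := by
    have hsplit : (fun u => g u * K u) = fun u => (g u - c) * K u + c * K u := by
      ext u
      ring
    rw [hsplit, integral_add hgK (hKi.const_mul c), integral_const_mul, hK1, mul_one,
      add_sub_cancel_right]
  calc |(∫ u, g u * K u) - c| = ‖∫ u, (g u - c) * K u‖ := by rw [herr, Real.norm_eq_abs]
    _ ≤ ∫ u, ‖(g u - c) * K u‖ := norm_integral_le_integral_norm _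
    _ ≤ ∫ u, D u * ω := integral_mono hgK.norm (hD.mul_const ω) hbound'
    _ = (∫ u, D u) * ω := integral_mul_const _ _

end Kernel

theorem fejer_type_uniform_estimate_first_moment_general (K : ℝ → ℝ)
    (hKe : ∀ t : ℝ, K (-t) = K t) (hKi : Integrable K) (hK1 : ∫ t : ℝ, K t = 1)
    (hKd : IntegrableOn (fun u : ℝ => u * |K u|) (Set.Ioi 1))
    (f : ℝ → ℝ) (hf : UniformContinuous f) :
    ∃ C : ℝ, ∀ l : ℝ, 1 ≤ l → ∀ x : ℝ,
      |(l * ∫ t : ℝ, f t * K (l * (t - x))) - f x| ≤ C * modulus f (1 / l) := by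
  have hD := hKi.abs.add (integrable_abs_mul_abs_of_even hKe hKi hKd)
  refine ⟨∫ u, |K u| + |u| * |K u|, fun l hl x => ?_⟩
  have hl0 : 0 < l := one_pos.trans_le hl
  rw [mul_integral_comp_mul_sub f hl0 x]
  refine abs_integral_mul_sub_le hKi hK1
    (hf.continuous.comp (by fun_prop)).aestronglyMeasurable hD fun u => ?_
  calc |f (x + u / l) - f x| * |K u|
      ≤ (1 + |u / l| / (1 / l)) * modulus f (1 / l) * |K u| := by
        gcongr
        exact abs_sub_le_one_add_div_mul_modulus hf (by positivity) x (u / l)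
    _ = (|K u| + |u| * |K u|) * modulus f (1 / l) := by
        rw [abs_div, abs_of_pos hl0]
        field_simp

theorem fejer_type_uniform_estimate_first_moment (K : ℝ → ℝ)
    (hKe : ∀ t : ℝ, K (-t) = K t) (hKi : Integrable K) (hK1 : ∫ t : ℝ, K t = 1)
    (hKb : ∃ M : ℝ, ∀ x ∈ Set.Icc (-1:ℝ) 1, |K x| ≤ M)
    (hKd : IntegrableOn (fun u : ℝ => u * |K u|) (Set.Ioi 1))
    (f : ℝ → ℝ) (hf : UniformContinuous f) (hb : ∃ M : ℝ, ∀ x, |f x| ≤ M) :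
    ∃ C : ℝ, ∀ l : ℝ, 1 ≤ l → ∀ x : ℝ,
      |(l * ∫ t : ℝ, f t * K (l * (t - x))) - f x| ≤ C * modulus f (1 / l) :=
  fejer_type_uniform_estimate_first_moment_general K hKe hKi hK1 hKd f hf
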